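/- Gluing of two local star products (two-set case): Let U₁, U₂ be open sets covering M with a gauge transformation T₂₁ = Id + O(h) on U₁∩U₂ intertwining ⋆₁ and ⋆₂ (T₂₁(f) ⋆₂ T₂₁(g) = T₂₁(f ⋆₁ g)), and let φ₁ + φ₂ = 1 be a subordinate partition of unity. Define A₂₁ := φ₁·Id + φ₂·T₂₁ on U₁∩U₂. Then A₂₁ = Id + O(h) is invertible, and the formula f ⋆ g = A₂₁(A₂₁⁻¹(f) ⋆₁ A₂₁⁻¹(g)) on U₁∩U₂ (extended by ⋆₁ on U₁∖U₂ and ⋆₂ on U₂∖U₁) defines an associative product; moreover the analogous operator A₁₂ := φ₁T₁₂ + φ₂Id with T₁₂ = T₂₁⁻¹ satisfies A₂₁ = A₁₂ ∘ T₂₁, and the two glued products coincide on the overlap. (Algebraic core: for algebras B₁, B₂ with isomorphism T and idempotent-free convex combination A = φ₁Id + φ₂T with A invertible, the transported product A(A⁻¹f · A⁻¹g) is associative and independent of the choice between A₂₁ and A₁₂ up to the stated identity.) -/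

import Mathlib

open PowerSeries

/-- A star product on `R[[h]]`. -/
structure StarProduct (R : Type*) [CommRing R] [Algebra ℝ R] where
  mul : PowerSeries R → PowerSeries R → PowerSeries R
  add_left : ∀ f g k, mul (f + g) k = mul f k + mul g k
  add_right : ∀ f g k, mul f (g + k) = mul f g + mul f k
  smul_left : ∀ (c : ℝ) f g, mul (c • f) g = c • mul f g
  smul_right : ∀ (c : ℝ) f g, mul f (c • g) = c • mul f g
  X_left : ∀ f g, mul (X * f) g = X * mul f g
  X_right : ∀ f g, mul f (X * g) = X * mul f g
  assoc : ∀ f g k, mul (mul f g) k = mul f (mul g k)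
  mod_h : ∀ f g, constantCoeff (R := R) (mul f g) = constantCoeff (R := R) f * constantCoeff (R := R) g

/-- `A₂₁ = φ₁·Id + φ₂·T₂₁`. -/
noncomputable def glueA21 {R : Type*} [CommRing R] [Algebra ℝ R] (φ₁ φ₂ : R)
    (T : PowerSeries R → PowerSeries R) (f : PowerSeries R) : PowerSeries R :=
  C (R := R) φ₁ * f + C (R := R) φ₂ * T f

/-- `A₁₂ = φ₁·T₁₂ + φ₂·Id`, where `T₁₂ = T₂₁⁻¹` (here `S`). -/
noncomputable def glueA12 {R : Type*} [CommRing R] [Algebra ℝ R] (φ₁ φ₂ : R)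
    (S : PowerSeries R → PowerSeries R) (f : PowerSeries R) : PowerSeries R :=
  C (R := R) φ₁ * S f + C (R := R) φ₂ * f

/-!
Write `A₂₁ = Id - N` with `N = φ₂ (Id - T₂₁)`. Since `T₂₁ = Id + O(h)` commutes with `h`, the map
`N` raises the `h`-adic order, so `A₂₁` is injective (a fixed point of `N` lies in every `hⁿ R⟦h⟧`)
and the Neumann series `∑ Nᵏ` converges coefficientwise to an inverse. Everything else is
transport of structure: `A₁₂ = A₂₁ ∘ T₁₂`, so `A₁₂⁻¹ = T₂₁ ∘ A₂₁⁻¹`, and `T₂₁` intertwines the products.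
-/

namespace PowerSeries

variable {R : Type*} [Ring R]

theorem map_X_pow_mul_of_map_X_mul {M : R⟦X⟧ → R⟦X⟧} (hM : ∀ f, M (X * f) = X * M f)
    (n : ℕ) (f : R⟦X⟧) : M (X ^ n * f) = X ^ n * M f := by
  induction n generalizing f with
  | zero => simp
  | succ n ih => rw [pow_succ', mul_assoc, hM, ih, ← mul_assoc]

theorem X_pow_dvd_map_sub_map {M : R⟦X⟧ →+ R⟦X⟧} (hM : ∀ f, M (X * f) = X * M f)
    {n : ℕ} {f g : R⟦X⟧} (h : X ^ n ∣ f - g) : X ^ n ∣ M f - M g := by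
  obtain ⟨q, hq⟩ := h
  exact ⟨M q, by rw [← map_sub, hq, map_X_pow_mul_of_map_X_mul hM]⟩

theorem coeff_eq_of_X_pow_succ_dvd_sub {n : ℕ} {f g : R⟦X⟧} (h : X ^ (n + 1) ∣ f - g) :
    coeff n f = coeff n g := by
  rw [← sub_eq_zero, ← map_sub]
  exact X_pow_dvd_iff.mp h n n.lt_succ_self

section NeumannSeries

variable {N : R⟦X⟧ →+ R⟦X⟧}

theorem X_pow_succ_dvd_map_of_X_pow_dvd (hNX : ∀ f, N (X * f) = X * N f)
    (hN0 : ∀ f, constantCoeff (N f) = 0) {n : ℕ} {f : R⟦X⟧} (h : X ^ n ∣ f) :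
    X ^ (n + 1) ∣ N f := by
  obtain ⟨q, rfl⟩ := h
  rw [map_X_pow_mul_of_map_X_mul hNX, pow_succ]
  exact mul_dvd_mul_left _ (X_dvd_iff.mpr (hN0 q))

theorem coeff_iterate_of_lt (hNX : ∀ f, N (X * f) = X * N f)
    (hN0 : ∀ f, constantCoeff (N f) = 0) {m k : ℕ} (h : m < k) (f : R⟦X⟧) :
    coeff m (N^[k] f) = 0 := by
  have hdvd : ∀ k, X ^ k ∣ N^[k] f := by
    intro k
    induction k with
    | zero => simp
    | succ k ih =>
      rw [Function.iterate_succ_apply']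
      exact X_pow_succ_dvd_map_of_X_pow_dvd hNX hN0 ih
  exact X_pow_dvd_iff.mp (hdvd k) m h

theorem eq_zero_of_map_eq_self (hNX : ∀ f, N (X * f) = X * N f)
    (hN0 : ∀ f, constantCoeff (N f) = 0) {f : R⟦X⟧} (h : N f = f) : f = 0 := by
  ext n
  rw [← Function.iterate_fixed h (n + 1), coeff_iterate_of_lt hNX hN0 n.lt_succ_self, map_zero]

theorem sum_iterate_sub_map_sum_iterate (n : ℕ) (g : R⟦X⟧) :
    ∑ k ∈ Finset.range n, N^[k] g - N (∑ k ∈ Finset.range n, N^[k] g) = g - N^[n] g := by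
  rw [map_sum, ← Finset.sum_sub_distrib]
  simp_rw [← Function.iterate_succ_apply' N]
  exact Finset.sum_range_sub' _ n

theorem coeff_sum_iterate_of_lt (hNX : ∀ f, N (X * f) = X * N f)
    (hN0 : ∀ f, constantCoeff (N f) = 0) {m n : ℕ} (h : m < n) (g : R⟦X⟧) :
    coeff m (∑ k ∈ Finset.range n, N^[k] g) = coeff m (∑ k ∈ Finset.range (m + 1), N^[k] g) := by
  rw [← Finset.sum_range_add_sum_Ico _ h, map_add, add_eq_left, map_sum]
  refine Finset.sum_eq_zero fun k hk => coeff_iterate_of_lt hNX hN0 ?_ g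
  exact (Finset.mem_Ico.mp hk).1

/-- The coefficient of `hⁿ` of `∑ₖ Nᵏ g` only involves the terms with `k ≤ n`. -/
noncomputable def neumannSeries (N : R⟦X⟧ →+ R⟦X⟧) (g : R⟦X⟧) : R⟦X⟧ :=
  mk fun n => coeff n (∑ k ∈ Finset.range (n + 1), N^[k] g)

theorem X_pow_dvd_neumannSeries_sub (hNX : ∀ f, N (X * f) = X * N f)
    (hN0 : ∀ f, constantCoeff (N f) = 0) (n : ℕ) (g : R⟦X⟧) :
    X ^ n ∣ neumannSeries N g - ∑ k ∈ Finset.range n, N^[k] g := by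
  refine X_pow_dvd_iff.mpr fun m hm => ?_
  rw [map_sub, neumannSeries, coeff_mk, coeff_sum_iterate_of_lt hNX hN0 hm, sub_self]

theorem neumannSeries_sub_map (hNX : ∀ f, N (X * f) = X * N f)
    (hN0 : ∀ f, constantCoeff (N f) = 0) (g : R⟦X⟧) :
    neumannSeries N g - N (neumannSeries N g) = g := by
  ext n
  set P := ∑ k ∈ Finset.range (n + 1), N^[k] g
  have hP := X_pow_dvd_neumannSeries_sub hNX hN0 (n + 1) g
  have hcongr : X ^ (n + 1) ∣ (neumannSeries N g - N (neumannSeries N g)) - (P - N P) := by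
    convert dvd_sub hP (X_pow_dvd_map_sub_map hNX hP) using 1
    abel
  rw [coeff_eq_of_X_pow_succ_dvd_sub hcongr, sum_iterate_sub_map_sum_iterate, map_sub,
    coeff_iterate_of_lt hNX hN0 n.lt_succ_self, sub_zero]

theorem bijective_sub_map (hNX : ∀ f, N (X * f) = X * N f)
    (hN0 : ∀ f, constantCoeff (N f) = 0) : Function.Bijective fun f => f - N f := by
  refine ⟨fun f g h => ?_, fun g => ⟨neumannSeries N g, neumannSeries_sub_map hNX hN0 g⟩⟩
  have hfix : N (f - g) = f - g := by
    rw [map_sub]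
    exact (sub_eq_sub_iff_sub_eq_sub.mp h).symm
  exact sub_eq_zero.mp (eq_zero_of_map_eq_self hNX hN0 hfix)

end NeumannSeries

theorem bijective_of_map_X_mul_of_constantCoeff {A : R⟦X⟧ →+ R⟦X⟧}
    (hAX : ∀ f, A (X * f) = X * A f)
    (hA0 : ∀ f, constantCoeff (A f) = constantCoeff f) : Function.Bijective A := by
  have h := bijective_sub_map (N := AddMonoidHom.id _ - A)
    (fun f => by simp [hAX, mul_sub]) (fun f => by simp [hA0])
  simpa using h

end PowerSeries

section Gluing

variable {R : Type*} [CommRing R] [Algebra ℝ R] (φ₁ φ₂ : R)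

theorem glueA21_X_mul {T : R⟦X⟧ → R⟦X⟧} (hTX : ∀ f, T (X * f) = X * T f) (f : R⟦X⟧) :
    glueA21 φ₁ φ₂ T (X * f) = X * glueA21 φ₁ φ₂ T f := by
  simp only [glueA21, hTX]
  ring

theorem constantCoeff_glueA21 {T : R⟦X⟧ → R⟦X⟧}
    (hT0 : ∀ f, constantCoeff (T f) = constantCoeff f) (hpart : φ₁ + φ₂ = 1) (f : R⟦X⟧) :
    constantCoeff (glueA21 φ₁ φ₂ T f) = constantCoeff f := by
  simp only [glueA21, map_add, map_mul, constantCoeff_C, hT0, ← add_mul, hpart, one_mul]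

theorem bijective_glueA21 {T : R⟦X⟧ →+ R⟦X⟧} (hTX : ∀ f, T (X * f) = X * T f)
    (hT0 : ∀ f, constantCoeff (T f) = constantCoeff f) (hpart : φ₁ + φ₂ = 1) :
    Function.Bijective (glueA21 φ₁ φ₂ T) :=
  PowerSeries.bijective_of_map_X_mul_of_constantCoeff
    (A := AddMonoidHom.mk' (glueA21 φ₁ φ₂ T) fun f g => by simp only [glueA21, map_add]; ring)
    (glueA21_X_mul φ₁ φ₂ hTX) (constantCoeff_glueA21 φ₁ φ₂ hT0 hpart)

theorem glueA12_eq_glueA21 {T S : R⟦X⟧ → R⟦X⟧} (hTS : ∀ f, T (S f) = f) (f : R⟦X⟧) :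
    glueA12 φ₁ φ₂ S f = glueA21 φ₁ φ₂ T (S f) := by
  rw [glueA12, glueA21, hTS]

theorem glueA12_map_eq_glueA21 {T S : R⟦X⟧ → R⟦X⟧} (hST : ∀ f, S (T f) = f) (hTS : ∀ f, T (S f) = f)
    (f : R⟦X⟧) : glueA12 φ₁ φ₂ S (T f) = glueA21 φ₁ φ₂ T f := by
  rw [glueA12_eq_glueA21 φ₁ φ₂ hTS, hST]

end Gluing

theorem stmt14_general {R : Type*} [CommRing R] [Algebra ℝ R]
    (s₁ s₂ : StarProduct R)
    (T S : PowerSeries R →ₗ[ℝ] PowerSeries R)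
    (hST : ∀ f, S (T f) = f) (hTS : ∀ f, T (S f) = f)
    (hTX : ∀ f, T (X * f) = X * T f)
    (hTmod : ∀ f, constantCoeff (R := R) (T f) = constantCoeff (R := R) f)
    (hint : ∀ f g, T (s₁.mul f g) = s₂.mul (T f) (T g))
    (φ₁ φ₂ : R) (hpart : φ₁ + φ₂ = 1) :
    (∀ f, constantCoeff (R := R) (glueA21 φ₁ φ₂ T f) = constantCoeff (R := R) f) ∧
    Function.Bijective (glueA21 φ₁ φ₂ T) ∧
    (∀ f, glueA12 φ₁ φ₂ S (T f) = glueA21 φ₁ φ₂ T f) ∧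
    ∃ B B' : PowerSeries R → PowerSeries R,
      (∀ f, B (glueA21 φ₁ φ₂ T f) = f) ∧ (∀ f, glueA21 φ₁ φ₂ T (B f) = f) ∧
      (∀ f, B' (glueA12 φ₁ φ₂ S f) = f) ∧ (∀ f, glueA12 φ₁ φ₂ S (B' f) = f) ∧
      (∀ f g k,
        glueA21 φ₁ φ₂ T (s₁.mul (B (glueA21 φ₁ φ₂ T (s₁.mul (B f) (B g)))) (B k))
          = glueA21 φ₁ φ₂ T (s₁.mul (B f) (B (glueA21 φ₁ φ₂ T (s₁.mul (B g) (B k)))))) ∧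
      (∀ f g,
        glueA21 φ₁ φ₂ T (s₁.mul (B f) (B g))
          = glueA12 φ₁ φ₂ S (s₂.mul (B' f) (B' g))) := by
  have hA : Function.Bijective (glueA21 φ₁ φ₂ T) :=
    bijective_glueA21 φ₁ φ₂ (T := T.toAddMonoidHom) hTX hTmod hpart
  obtain ⟨B, hBA, hAB⟩ := Function.bijective_iff_has_inverse.mp hA
  have hA12 := glueA12_eq_glueA21 φ₁ φ₂ hTS
  refine ⟨constantCoeff_glueA21 φ₁ φ₂ hTmod hpart, hA, glueA12_map_eq_glueA21 φ₁ φ₂ hST hTS,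
    B, T ∘ B, hBA, hAB, fun f => ?_, fun f => ?_, fun f g k => ?_, fun f g => ?_⟩
  · rw [Function.comp_apply, hA12, hBA, hTS]
  · rw [Function.comp_apply, hA12, hST, hAB]
  · rw [hBA, hBA, s₁.assoc]
  · rw [hA12, Function.comp_apply, Function.comp_apply, ← hint, hST]

/-- Gluing of two local star products (algebraic core of the two-set case): with
`T₂₁ = Id + O(h)` intertwining `⋆₁` and `⋆₂` and `φ₁ + φ₂ = 1` a partition of unity,
the operator `A₂₁ = φ₁Id + φ₂T₂₁` is `Id + O(h)` and invertible, `A₂₁ = A₁₂ ∘ T₂₁`,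
the transported product `f ⋆ g = A₂₁(A₂₁⁻¹(f) ⋆₁ A₂₁⁻¹(g))` is associative, and it
coincides with the product glued the other way, via `A₁₂` from `⋆₂`. -/
theorem stmt14 {R : Type*} [CommRing R] [Algebra ℝ R]
    (s₁ s₂ : StarProduct R)
    (T S : PowerSeries R →ₗ[ℝ] PowerSeries R)
    (hST : ∀ f, S (T f) = f) (hTS : ∀ f, T (S f) = f)
    (hTX : ∀ f, T (X * f) = X * T f)
    (hTmod : ∀ f, constantCoeff (R := R) (T f) = constantCoeff (R := R) f)
    (hTR : ∀ (r : R) f, T (C (R := R) r * f) = C (R := R) r * T f)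
    (hint : ∀ f g, T (s₁.mul f g) = s₂.mul (T f) (T g))
    (φ₁ φ₂ : R) (hpart : φ₁ + φ₂ = 1) :
    (∀ f, constantCoeff (R := R) (glueA21 φ₁ φ₂ T f) = constantCoeff (R := R) f) ∧
    Function.Bijective (glueA21 φ₁ φ₂ T) ∧
    (∀ f, glueA12 φ₁ φ₂ S (T f) = glueA21 φ₁ φ₂ T f) ∧
    ∃ B B' : PowerSeries R → PowerSeries R,
      (∀ f, B (glueA21 φ₁ φ₂ T f) = f) ∧ (∀ f, glueA21 φ₁ φ₂ T (B f) = f) ∧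
      (∀ f, B' (glueA12 φ₁ φ₂ S f) = f) ∧ (∀ f, glueA12 φ₁ φ₂ S (B' f) = f) ∧
      (∀ f g k,
        glueA21 φ₁ φ₂ T (s₁.mul (B (glueA21 φ₁ φ₂ T (s₁.mul (B f) (B g)))) (B k))
          = glueA21 φ₁ φ₂ T (s₁.mul (B f) (B (glueA21 φ₁ φ₂ T (s₁.mul (B g) (B k)))))) ∧
      (∀ f g,
        glueA21 φ₁ φ₂ T (s₁.mul (B f) (B g))
          = glueA12 φ₁ φ₂ S (s₂.mul (B' f) (B' g))) :=
  stmt14_general s₁ s₂ T S hST hTS hTX hTmod hint φ₁ φ₂ hpart
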